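/- Any exact quantum algorithm (error probability 0) for searching an ordered list of N elements, in the phase-oracle query model, requires more than (ln(N) − 1)/π queries; more generally, with error probability at most ε it requires at least (1 − 2√(ε(1−ε)))·(H_N − 1)/π queries. -/

import Mathlib

open scoped BigOperators

noncomputable section OrderedSearchModel

/-- The phase oracle for the input string `x` (with cutoff `N`): a basis vector `b`
querying index `idx b` picks up the sign `(−1)^{x_{idx b}}` if `idx b < N`, and is
left unchanged otherwise. -/
def oracleApply (N M : ℕ) (x : ℕ → Bool) (idx : Fin M → ℕ)
    (ψ : EuclideanSpace ℂ (Fin M)) : EuclideanSpace ℂ (Fin M) :=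
  WithLp.toLp 2 (fun b => (if idx b < N ∧ x (idx b) then (-1 : ℂ) else 1) * ψ b)

/-- The state `(U O_x)^j U |init⟩` of the algorithm after `j` queries. -/
def stateAfter (N M : ℕ) (U : EuclideanSpace ℂ (Fin M) ≃ₗᵢ[ℂ] EuclideanSpace ℂ (Fin M))
    (idx : Fin M → ℕ) (x : ℕ → Bool) (init : EuclideanSpace ℂ (Fin M)) :
    ℕ → EuclideanSpace ℂ (Fin M)
  | 0 => U init
  | j + 1 => U (oracleApply N M x idx (stateAfter N M U idx x init j))

/-- Probability that measuring `ψ` in the computational basis yields an outcome with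
answer label `v`. -/
def successProb {M : ℕ} {α : Type} [DecidableEq α] (ans : Fin M → α) (v : α)
    (ψ : EuclideanSpace ℂ (Fin M)) : ℝ :=
  ∑ b ∈ Finset.univ.filter (fun b => ans b = v), ‖ψ b‖ ^ 2

/-- `x` is a valid ordered-search instance on `N` bits: nondecreasing and of nonzero
Hamming weight. -/
def SortedNonzero (N : ℕ) (x : ℕ → Bool) : Prop :=
  (∀ i j, i ≤ j → j < N → x i = true → x j = true) ∧ (∃ i, i < N ∧ x i = true)

/-- The answer to the ordered search problem: the position of the leftmost `1`. -/
def fval (x : ℕ → Bool) : ℕ := sInf {i | x i = true}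

end OrderedSearchModel

/-!
Høyer–Neerbek–Shi weighted adversary. Run the algorithm on the inputs `x_j = 0^j 1^∞`,
`j < N`, and follow `W = ∑_{j<k} Re⟨ψ_j, ψ_k⟩ / (k - j)`. Initially all states coincide and
`W = N H_N - N`. A query changes `⟨ψ_j, ψ_k⟩` only through the amplitudes on the indices
`i ∈ [j, k)`; grouped by `i`, the change is a sum of Hilbert-matrix bilinear forms, so by
Hilbert's inequality (the Hilbert matrix has norm `π`) one query lowers `W` by at most `π N`.
At the end the states for `j ≠ k` are measured to different answers, which forces
`Re⟨ψ_j, ψ_k⟩ ≤ 2√(ε(1-ε))` and hence `W ≤ 2√(ε(1-ε)) (N H_N - N)`. For `ε = 0`,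
`ln N < H_N`.
-/

open Finset Real

lemma sub_div_one_add_sq_le_arctan_sub_arctan {a b : ℝ} (hb : 0 ≤ b) (hba : b ≤ a) :
    (a - b) / (1 + a ^ 2) ≤ arctan a - arctan b := by
  have hderiv : ∀ x ∈ interior (Set.Icc b a), 1 / (1 + a ^ 2) ≤ deriv arctan x := by
    intro x hx
    rw [interior_Icc] at hx
    rw [Real.deriv_arctan]
    exact one_div_le_one_div_of_le (by positivity) (by nlinarith [hx.1, hx.2])
  have := (convex_Icc b a : Convex ℝ (Set.Icc b a)).mul_sub_le_image_sub_of_le_deriv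
    continuous_arctan.continuousOn differentiable_arctan.differentiableOn hderiv
    b ⟨le_rfl, hba⟩ a ⟨hba, le_rfl⟩ hba
  rwa [one_div_mul_eq_div] at this

/-- For `s = √(2d + 1)` and `r = √(2e + 1)` the left side is `hilbertSchurWeight d e`; taking for
`r'` the previous value of `r` (`0` when `e = 0`) makes its row sums telescope. -/
lemma two_mul_div_le_arctan_sub_arctan {s r r' : ℝ} (hs : 0 < s) (hr : 0 < r) (hr' : 0 ≤ r')
    (hrr' : 1 ≤ r * (r - r')) :
    2 * s / (r * (s ^ 2 + r ^ 2)) ≤ 2 * (arctan (r / s) - arctan (r' / s)) := by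
  have hr'r : r' ≤ r := by nlinarith
  have key := sub_div_one_add_sq_le_arctan_sub_arctan (div_nonneg hr' hs.le)
    (div_le_div_of_nonneg_right hr'r hs.le)
  have hrewrite : (r / s - r' / s) / (1 + (r / s) ^ 2) = s * (r - r') / (s ^ 2 + r ^ 2) := by
    field_simp
  rw [hrewrite] at key
  have : s / (r * (s ^ 2 + r ^ 2)) ≤ s * (r - r') / (s ^ 2 + r ^ 2) := by
    rw [div_le_div_iff₀ (by positivity) (by positivity)]
    have := mul_le_mul_of_nonneg_left hrr' (by positivity : 0 ≤ s * (s ^ 2 + r ^ 2))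
    nlinarith
  rw [mul_div_assoc]
  linarith

/-- Schur-test weight for the Hilbert matrix `1 / (d + e + 1)`, with test vector
`(2d + 1) ^ (-1/2)`. -/
noncomputable def hilbertSchurWeight (d e : ℕ) : ℝ :=
  √(2 * d + 1) / (√(2 * e + 1) * (d + e + 1))

lemma hilbertSchurWeight_eq (d e : ℕ) :
    hilbertSchurWeight d e =
      2 * √(2 * d + 1) / (√(2 * e + 1) * (√(2 * d + 1) ^ 2 + √(2 * e + 1) ^ 2)) := by
  rw [hilbertSchurWeight, sq_sqrt (by positivity), sq_sqrt (by positivity)]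
  rw [show (2 * d + 1 + (2 * e + 1) : ℝ) = 2 * (d + e + 1) by ring]
  field_simp

lemma sum_range_succ_hilbertSchurWeight_le (d E : ℕ) :
    ∑ e ∈ range (E + 1), hilbertSchurWeight d e ≤ 2 * arctan (√(2 * E + 1) / √(2 * d + 1)) := by
  have hs : 0 < √(2 * (d : ℝ) + 1) := sqrt_pos.mpr (by positivity)
  induction E with
  | zero =>
    have := two_mul_div_le_arctan_sub_arctan hs one_pos le_rfl (by norm_num)
    simpa [hilbertSchurWeight_eq] using this
  | succ E ih =>
    set r := √(2 * ((E + 1 : ℕ) : ℝ) + 1)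
    set r' := √(2 * (E : ℝ) + 1)
    have hr : 0 < r := sqrt_pos.mpr (by positivity)
    -- `r * (r - r') ≥ (r ^ 2 - r' ^ 2) / 2 = 1`
    have hrr' : 1 ≤ r * (r - r') := by
      have hdiff : r ^ 2 - r' ^ 2 = 2 := by
        rw [sq_sqrt (by positivity), sq_sqrt (by positivity)]
        push_cast
        ring
      nlinarith [sq_nonneg (r - r')]
    have hstep := two_mul_div_le_arctan_sub_arctan hs hr (sqrt_nonneg _) hrr'
    rw [sum_range_succ, hilbertSchurWeight_eq]
    linarith

lemma sum_hilbertSchurWeight_le_pi (d E : ℕ) : ∑ e ∈ range E, hilbertSchurWeight d e ≤ π := by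
  cases E with
  | zero => simp [pi_pos.le]
  | succ E =>
    linarith [sum_range_succ_hilbertSchurWeight_le d E,
      arctan_lt_pi_div_two (√(2 * E + 1) / √(2 * d + 1))]

lemma mul_div_le_hilbertSchurWeight (x y : ℝ) (d e : ℕ) :
    x * y / (d + e + 1) ≤
      (x ^ 2 * hilbertSchurWeight d e + y ^ 2 * hilbertSchurWeight e d) / 2 := by
  have hs : 0 < √(2 * (d : ℝ) + 1) := sqrt_pos.mpr (by positivity)
  have hr : 0 < √(2 * (e : ℝ) + 1) := sqrt_pos.mpr (by positivity)
  rw [hilbertSchurWeight, hilbertSchurWeight, add_right_comm (e : ℝ), add_comm (e : ℝ)]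
  rw [div_le_div_iff₀ (by positivity) two_pos]
  field_simp
  nlinarith [sq_nonneg (x * √(2 * (d : ℝ) + 1) - y * √(2 * (e : ℝ) + 1))]

theorem hilbert_inequality (u v : ℕ → ℝ) (D E : ℕ) :
    ∑ d ∈ range D, ∑ e ∈ range E, u d * v e / (d + e + 1) ≤
      π / 2 * (∑ d ∈ range D, u d ^ 2 + ∑ e ∈ range E, v e ^ 2) := by
  have hu : ∑ d ∈ range D, ∑ e ∈ range E, u d ^ 2 * hilbertSchurWeight d e ≤
      ∑ d ∈ range D, u d ^ 2 * π := by
    refine sum_le_sum fun d _ => ?_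
    rw [← mul_sum]
    exact mul_le_mul_of_nonneg_left (sum_hilbertSchurWeight_le_pi d E) (sq_nonneg _)
  have hv : ∑ d ∈ range D, ∑ e ∈ range E, v e ^ 2 * hilbertSchurWeight e d ≤
      ∑ e ∈ range E, v e ^ 2 * π := by
    rw [sum_comm]
    refine sum_le_sum fun e _ => ?_
    rw [← mul_sum]
    exact mul_le_mul_of_nonneg_left (sum_hilbertSchurWeight_le_pi e D) (sq_nonneg _)
  calc ∑ d ∈ range D, ∑ e ∈ range E, u d * v e / (d + e + 1)
      ≤ ∑ d ∈ range D, ∑ e ∈ range E,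
          (u d ^ 2 * hilbertSchurWeight d e + v e ^ 2 * hilbertSchurWeight e d) / 2 :=
        sum_le_sum fun d _ => sum_le_sum fun e _ => mul_div_le_hilbertSchurWeight _ _ d e
    _ = (∑ d ∈ range D, ∑ e ∈ range E, u d ^ 2 * hilbertSchurWeight d e +
          ∑ d ∈ range D, ∑ e ∈ range E, v e ^ 2 * hilbertSchurWeight e d) / 2 := by
        simp only [← sum_div, ← sum_add_distrib]
    _ ≤ π / 2 * (∑ d ∈ range D, u d ^ 2 + ∑ e ∈ range E, v e ^ 2) := by
        rw [← sum_mul] at hu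
        rw [← sum_mul] at hv
        linarith

lemma hilbert_inequality_around (a : ℕ → ℝ) {i N : ℕ} (hi : i < N) :
    ∑ j ∈ range (i + 1), ∑ k ∈ Ico (i + 1) N, a j * a k / ((k - j : ℕ) : ℝ) ≤
      π / 2 * ∑ j ∈ range N, a j ^ 2 := by
  have hreindex : ∑ j ∈ range (i + 1), ∑ k ∈ Ico (i + 1) N, a j * a k / ((k - j : ℕ) : ℝ) =
      ∑ d ∈ range (i + 1), ∑ e ∈ range (N - (i + 1)),
        a (i - d) * a (i + 1 + e) / (d + e + 1) := by
    rw [← sum_range_reflect]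
    refine sum_congr rfl fun d hd => ?_
    rw [sum_Ico_eq_sum_range, add_tsub_cancel_right]
    refine sum_congr rfl fun e _ => ?_
    rw [show i + 1 + e - (i - d) = d + e + 1 by grind]
    push_cast
    rfl
  have hsquares : ∑ j ∈ range N, a j ^ 2 =
      ∑ d ∈ range (i + 1), a (i - d) ^ 2 + ∑ e ∈ range (N - (i + 1)), a (i + 1 + e) ^ 2 := by
    rw [← sum_range_add_sum_Ico _ hi, sum_Ico_eq_sum_range, ← sum_range_reflect (n := i + 1)]
    simp only [add_tsub_cancel_right]
  rw [hreindex, hsquares]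
  exact hilbert_inequality _ _ _ _

lemma sum_range_one_div_sub_eq_harmonic (N : ℕ) :
    ∑ j ∈ range N, (1 : ℝ) / ((N - j : ℕ) : ℝ) = harmonic N := by
  rw [← sum_range_reflect, harmonic]
  push_cast
  refine sum_congr rfl fun j hj => ?_
  rw [show N - (N - 1 - j) = j + 1 by grind]
  simp

lemma sum_range_sum_Ico_one_div_sub_eq (N : ℕ) :
    ∑ j ∈ range N, ∑ k ∈ Ico (j + 1) N, (1 : ℝ) / ((k - j : ℕ) : ℝ) = N * harmonic N - N := by
  induction N with
  | zero => simp
  | succ N ih =>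
    have hsplit : ∑ j ∈ range (N + 1), ∑ k ∈ Ico (j + 1) (N + 1), (1 : ℝ) / ((k - j : ℕ) : ℝ) =
        ∑ j ∈ range N, ∑ k ∈ Ico (j + 1) N, (1 : ℝ) / ((k - j : ℕ) : ℝ) +
          ∑ j ∈ range N, (1 : ℝ) / ((N - j : ℕ) : ℝ) := by
      rw [sum_range_succ, Ico_self, sum_empty, add_zero, ← sum_add_distrib]
      exact sum_congr rfl fun j hj => sum_Ico_succ_top (by grind) _
    rw [hsplit, ih, sum_range_one_div_sub_eq_harmonic, harmonic_succ]
    push_cast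
    field_simp
    ring

lemma log_lt_harmonic {N : ℕ} (hN : 0 < N) : log N < harmonic N :=
  calc log N < log (N + 1) := log_lt_log (by positivity) (lt_add_one _)
    _ ≤ harmonic N := mod_cast log_add_one_le_harmonic N

lemma sum_Icc_one_div_eq_harmonic (N : ℕ) : ∑ k ∈ Icc 1 N, (1 : ℝ) / k = harmonic N := by
  simp [harmonic_eq_sum_Icc]

lemma sq_sqrt_sub_sqrt_le_sum_norm_sub_sq {ι E : Type*} [SeminormedAddCommGroup E]
    (s : Finset ι) (f g : ι → E) :
    (√(∑ i ∈ s, ‖f i‖ ^ 2) - √(∑ i ∈ s, ‖g i‖ ^ 2)) ^ 2 ≤ ∑ i ∈ s, ‖f i - g i‖ ^ 2 := by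
  have hcs := Real.sum_mul_le_sqrt_mul_sqrt s (‖f ·‖) (‖g ·‖)
  have hterm : ∀ i, (‖f i‖ - ‖g i‖) ^ 2 ≤ ‖f i - g i‖ ^ 2 := fun i =>
    sq_le_sq' (abs_le.mp (abs_norm_sub_norm_le _ _)).1 (abs_le.mp (abs_norm_sub_norm_le _ _)).2
  calc (√(∑ i ∈ s, ‖f i‖ ^ 2) - √(∑ i ∈ s, ‖g i‖ ^ 2)) ^ 2
      = ∑ i ∈ s, ‖f i‖ ^ 2 + ∑ i ∈ s, ‖g i‖ ^ 2 -
          2 * (√(∑ i ∈ s, ‖f i‖ ^ 2) * √(∑ i ∈ s, ‖g i‖ ^ 2)) := by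
        rw [sub_sq, sq_sqrt (by positivity), sq_sqrt (by positivity)]
        ring
    _ ≤ ∑ i ∈ s, (‖f i‖ - ‖g i‖) ^ 2 := by
        simp only [sub_sq, sum_add_distrib, sum_sub_distrib, mul_assoc, ← mul_sum]
        linarith
    _ ≤ ∑ i ∈ s, ‖f i - g i‖ ^ 2 := sum_le_sum fun i _ => hterm i

section QueryModel

variable {N M : ℕ}

lemma norm_oracleApply (x : ℕ → Bool) (idx : Fin M → ℕ) (ψ : EuclideanSpace ℂ (Fin M)) :
    ‖oracleApply N M x idx ψ‖ = ‖ψ‖ := by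
  simp only [EuclideanSpace.norm_eq, oracleApply, norm_mul]
  congr 1
  refine sum_congr rfl fun b _ => ?_
  split_ifs <;> simp

lemma norm_stateAfter (U : EuclideanSpace ℂ (Fin M) ≃ₗᵢ[ℂ] EuclideanSpace ℂ (Fin M))
    (idx : Fin M → ℕ) (x : ℕ → Bool) (init : EuclideanSpace ℂ (Fin M)) (t : ℕ) :
    ‖stateAfter N M U idx x init t‖ = ‖init‖ := by
  induction t with
  | zero => exact U.norm_map init
  | succ t ih => rw [stateAfter, U.norm_map, norm_oracleApply, ih]

def thresholdInput (j : ℕ) : ℕ → Bool := fun i => decide (j ≤ i)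

lemma sortedNonzero_thresholdInput {j : ℕ} (hj : j < N) : SortedNonzero N (thresholdInput j) :=
  ⟨fun i i' hii' _ hi => by simp only [thresholdInput, decide_eq_true_eq] at hi ⊢; omega,
    ⟨j, hj, by simp [thresholdInput]⟩⟩

lemma fval_thresholdInput (j : ℕ) : fval (thresholdInput j) = j :=
  le_antisymm (Nat.sInf_le (by simp [thresholdInput]))
    (le_csInf ⟨j, by simp [thresholdInput]⟩ (by simp [thresholdInput]))

/-- The two oracles have opposite signs exactly on the queries `i ∈ [j, k)`. -/
lemma re_inner_sub_re_inner_oracleApply (idx : Fin M → ℕ) {j k : ℕ} (hjk : j ≤ k) (hkN : k ≤ N)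
    (ψ φ : EuclideanSpace ℂ (Fin M)) :
    RCLike.re (inner ℂ ψ φ) -
        RCLike.re (inner ℂ (oracleApply N M (thresholdInput j) idx ψ)
          (oracleApply N M (thresholdInput k) idx φ)) =
      2 * ∑ b ∈ univ.filter (fun b => idx b ∈ Ico j k), (starRingEnd ℂ (ψ b) * φ b).re := by
  simp only [PiLp.inner_apply, map_sum, sum_filter, mul_sum, ← sum_sub_distrib]
  refine sum_congr rfl fun b _ => ?_
  simp only [oracleApply, thresholdInput, PiLp.toLp_apply, decide_eq_true_eq, mem_Ico,
    RCLike.inner_apply, RCLike.re_to_complex]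
  split_ifs <;> first | omega | (simp <;> ring)

lemma sum_norm_sq_add_sum_norm_sq_le {S S' : Finset (Fin M)} (hSS' : Disjoint S S')
    (ψ : EuclideanSpace ℂ (Fin M)) :
    ∑ b ∈ S, ‖ψ b‖ ^ 2 + ∑ b ∈ S', ‖ψ b‖ ^ 2 ≤ ‖ψ‖ ^ 2 := by
  rw [← sum_union hSS', EuclideanSpace.norm_sq_eq]
  exact sum_le_sum_of_subset_of_nonneg (subset_univ _) fun _ _ _ => sq_nonneg _

/-- Both `S` and `S'` contribute `(√(1 - ε) - √ε)²` to `‖ψ - φ‖² = 2 - 2 Re⟨ψ, φ⟩`. -/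
lemma re_inner_le_of_disjoint {ε : ℝ} (hε0 : 0 ≤ ε) (hε1 : ε ≤ 1 / 2)
    {ψ φ : EuclideanSpace ℂ (Fin M)} (hψ : ‖ψ‖ = 1) (hφ : ‖φ‖ = 1)
    {S S' : Finset (Fin M)} (hSS' : Disjoint S S')
    (hψS : 1 - ε ≤ ∑ b ∈ S, ‖ψ b‖ ^ 2) (hφS' : 1 - ε ≤ ∑ b ∈ S', ‖φ b‖ ^ 2) :
    RCLike.re (inner ℂ ψ φ) ≤ 2 * √(ε * (1 - ε)) := by
  set c := √(1 - ε) - √ε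
  have hc : 0 ≤ c := sub_nonneg.mpr (sqrt_le_sqrt (by linarith))
  have hψS' := sum_norm_sq_add_sum_norm_sq_le hSS' ψ
  have hφS := sum_norm_sq_add_sum_norm_sq_le hSS' φ
  rw [hψ] at hψS'
  rw [hφ] at hφS
  have hS : c ≤ √(∑ b ∈ S, ‖ψ b‖ ^ 2) - √(∑ b ∈ S, ‖φ b‖ ^ 2) :=
    sub_le_sub (sqrt_le_sqrt hψS) (sqrt_le_sqrt (by linarith))
  have hS' : c ≤ √(∑ b ∈ S', ‖φ b‖ ^ 2) - √(∑ b ∈ S', ‖ψ b‖ ^ 2) :=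
    sub_le_sub (sqrt_le_sqrt hφS') (sqrt_le_sqrt (by linarith))
  have hdist : 2 * c ^ 2 ≤ ‖ψ - φ‖ ^ 2 := by
    have h1 := sq_sqrt_sub_sqrt_le_sum_norm_sub_sq S ψ φ
    have h2 := sq_sqrt_sub_sqrt_le_sum_norm_sub_sq S' φ ψ
    simp only [norm_sub_rev (φ _)] at h2
    have h3 := sum_norm_sq_add_sum_norm_sq_le hSS' (ψ - φ)
    simp only [PiLp.sub_apply] at h3
    nlinarith
  have hc2 : c ^ 2 = 1 - 2 * √(ε * (1 - ε)) := by
    rw [sub_sq, sq_sqrt (by linarith), sq_sqrt hε0, mul_comm ε, sqrt_mul (by linarith)]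
    ring
  rw [norm_sub_sq (𝕜 := ℂ), hψ, hφ] at hdist
  linarith

noncomputable def queryMass (idx : Fin M → ℕ) (ψ : EuclideanSpace ℂ (Fin M)) (i : ℕ) : ℝ :=
  ∑ b ∈ univ.filter (fun b => idx b = i), ‖ψ b‖ ^ 2

lemma sum_queryMass_le (idx : Fin M → ℕ) (ψ : EuclideanSpace ℂ (Fin M)) (s : Finset ℕ) :
    ∑ i ∈ s, queryMass idx ψ i ≤ ‖ψ‖ ^ 2 := by
  simp only [queryMass]
  rw [sum_fiberwise_eq_sum_filter, EuclideanSpace.norm_sq_eq]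
  exact sum_le_sum_of_subset_of_nonneg (filter_subset _ _) fun _ _ _ => sq_nonneg _

lemma sum_re_le_sum_sqrt_queryMass (idx : Fin M → ℕ) (ψ φ : EuclideanSpace ℂ (Fin M))
    (s : Finset ℕ) :
    ∑ b ∈ univ.filter (fun b => idx b ∈ s), (starRingEnd ℂ (ψ b) * φ b).re ≤
      ∑ i ∈ s, √(queryMass idx ψ i) * √(queryMass idx φ i) := by
  rw [← sum_fiberwise_eq_sum_filter]
  refine sum_le_sum fun i _ => ?_
  calc ∑ b ∈ univ.filter (fun b => idx b = i), (starRingEnd ℂ (ψ b) * φ b).re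
      ≤ ∑ b ∈ univ.filter (fun b => idx b = i), ‖ψ b‖ * ‖φ b‖ :=
        sum_le_sum fun b _ =>
          (Complex.re_le_norm _).trans_eq (by rw [norm_mul, Complex.norm_conj])
    _ ≤ √(queryMass idx ψ i) * √(queryMass idx φ i) := Real.sum_mul_le_sqrt_mul_sqrt _ _ _

noncomputable def weightedOverlap (N : ℕ) (ψ : ℕ → EuclideanSpace ℂ (Fin M)) : ℝ :=
  ∑ j ∈ range N, ∑ k ∈ Ico (j + 1) N, RCLike.re (inner ℂ (ψ j) (ψ k)) / ((k - j : ℕ) : ℝ)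

lemma weightedOverlap_const {ψ : EuclideanSpace ℂ (Fin M)} (hψ : ‖ψ‖ = 1) :
    weightedOverlap N (fun _ => ψ) = N * harmonic N - N := by
  have hre : RCLike.re (inner ℂ ψ ψ) = 1 := by
    rw [inner_self_eq_norm_sq, hψ, one_pow]
  simp only [weightedOverlap, hre, ← sum_range_sum_Ico_one_div_sub_eq]

lemma weightedOverlap_le {ψ : ℕ → EuclideanSpace ℂ (Fin M)} {δ : ℝ}
    (h : ∀ j k, j < k → k < N → RCLike.re (inner ℂ (ψ j) (ψ k)) ≤ δ) :
    weightedOverlap N ψ ≤ δ * (N * harmonic N - N) := by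
  rw [← sum_range_sum_Ico_one_div_sub_eq, mul_sum]
  refine sum_le_sum fun j _ => ?_
  rw [mul_sum]
  refine sum_le_sum fun k hk => ?_
  rw [mem_Ico] at hk
  rw [mul_one_div]
  exact div_le_div_of_nonneg_right (h j k hk.1 hk.2) (Nat.cast_nonneg _)

lemma sum_range_sum_Ico_sum_Ico_comm (N : ℕ) (f : ℕ → ℕ → ℕ → ℝ) :
    ∑ j ∈ range N, ∑ k ∈ Ico (j + 1) N, ∑ i ∈ Ico j k, f j k i =
      ∑ i ∈ range N, ∑ j ∈ range (i + 1), ∑ k ∈ Ico (i + 1) N, f j k i := by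
  calc ∑ j ∈ range N, ∑ k ∈ Ico (j + 1) N, ∑ i ∈ Ico j k, f j k i
      = ∑ j ∈ range N, ∑ i ∈ Ico j N, ∑ k ∈ Ico (i + 1) N, f j k i :=
        sum_congr rfl fun j _ => sum_comm' fun k i => by simp only [mem_Ico]; omega
    _ = ∑ i ∈ range N, ∑ j ∈ range (i + 1), ∑ k ∈ Ico (i + 1) N, f j k i :=
        sum_comm' fun j i => by simp only [mem_range, mem_Ico]; omega

lemma weightedOverlap_sub_weightedOverlap_query
    (U : EuclideanSpace ℂ (Fin M) ≃ₗᵢ[ℂ] EuclideanSpace ℂ (Fin M)) (idx : Fin M → ℕ)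
    (ψ : ℕ → EuclideanSpace ℂ (Fin M)) :
    weightedOverlap N ψ -
        weightedOverlap N (fun j => U (oracleApply N M (thresholdInput j) idx (ψ j))) =
      ∑ j ∈ range N, ∑ k ∈ Ico (j + 1) N, 2 * (∑ b ∈ univ.filter (fun b => idx b ∈ Ico j k),
          (starRingEnd ℂ (ψ j b) * ψ k b).re) / ((k - j : ℕ) : ℝ) := by
  simp only [weightedOverlap, ← sum_sub_distrib, ← sub_div, LinearIsometryEquiv.inner_map_map]
  refine sum_congr rfl fun j _ => sum_congr rfl fun k hk => ?_
  rw [mem_Ico] at hk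
  rw [re_inner_sub_re_inner_oracleApply idx (by omega) hk.2.le]

/-- Grouped by the queried index `i`, the change is a sum of Hilbert-matrix forms in the
amplitudes `√(queryMass idx (ψ j) i)`. -/
lemma weightedOverlap_sub_weightedOverlap_query_le
    (U : EuclideanSpace ℂ (Fin M) ≃ₗᵢ[ℂ] EuclideanSpace ℂ (Fin M)) (idx : Fin M → ℕ)
    (ψ : ℕ → EuclideanSpace ℂ (Fin M)) (hψ : ∀ j < N, ‖ψ j‖ ≤ 1) :
    weightedOverlap N ψ -
        weightedOverlap N (fun j => U (oracleApply N M (thresholdInput j) idx (ψ j))) ≤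
      π * N := by
  set A : ℕ → ℕ → ℝ := fun i j => √(queryMass idx (ψ j) i)
  rw [weightedOverlap_sub_weightedOverlap_query]
  calc _ ≤ ∑ j ∈ range N, ∑ k ∈ Ico (j + 1) N, ∑ i ∈ Ico j k,
          2 * (A i j * A i k / ((k - j : ℕ) : ℝ)) := by
        refine sum_le_sum fun j _ => sum_le_sum fun k _ => ?_
        simp only [mul_div_assoc', ← mul_sum, ← sum_div]
        gcongr
        exact sum_re_le_sum_sqrt_queryMass idx (ψ j) (ψ k) _
    _ = ∑ i ∈ range N, 2 * ∑ j ∈ range (i + 1), ∑ k ∈ Ico (i + 1) N,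
          A i j * A i k / ((k - j : ℕ) : ℝ) := by
        rw [sum_range_sum_Ico_sum_Ico_comm]
        simp only [mul_sum]
    _ ≤ ∑ i ∈ range N, 2 * (π / 2 * ∑ j ∈ range N, A i j ^ 2) :=
        sum_le_sum fun i hi => by
          gcongr
          exact hilbert_inequality_around (A i) (mem_range.mp hi)
    _ = π * ∑ j ∈ range N, ∑ i ∈ range N, queryMass idx (ψ j) i := by
        have hA : ∀ i j, A i j ^ 2 = queryMass idx (ψ j) i := fun i j =>
          sq_sqrt (sum_nonneg fun _ _ => sq_nonneg _)
        simp only [hA, ← mul_assoc, mul_div_cancel₀ π two_ne_zero, ← mul_sum]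
        rw [sum_comm]
    _ ≤ π * N := by
        gcongr
        calc ∑ j ∈ range N, ∑ i ∈ range N, queryMass idx (ψ j) i
            ≤ ∑ j ∈ range N, (1 : ℝ) := sum_le_sum fun j hj =>
              (sum_queryMass_le idx (ψ j) _).trans
                (pow_le_one₀ (norm_nonneg _) (hψ j (mem_range.mp hj)))
          _ = N := by simp

lemma weightedOverlap_stateAfter_zero_sub_le
    (U : EuclideanSpace ℂ (Fin M) ≃ₗᵢ[ℂ] EuclideanSpace ℂ (Fin M)) (idx : Fin M → ℕ)
    {init : EuclideanSpace ℂ (Fin M)} (hinit : ‖init‖ = 1) (T : ℕ) :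
    weightedOverlap N (fun j => stateAfter N M U idx (thresholdInput j) init 0) -
        weightedOverlap N (fun j => stateAfter N M U idx (thresholdInput j) init T) ≤
      T * (π * N) := by
  rw [← sum_range_sub'
    (fun t => weightedOverlap N (fun j => stateAfter N M U idx (thresholdInput j) init t))]
  calc _ ≤ ∑ _t ∈ range T, π * N := sum_le_sum fun t _ =>
        weightedOverlap_sub_weightedOverlap_query_le U idx _ fun j _ =>
          (norm_stateAfter U idx _ init t).trans_le hinit.le
    _ = T * (π * N) := by simp

lemma weightedOverlap_stateAfter_le {ε : ℝ} (hε0 : 0 ≤ ε) (hε1 : ε ≤ 1 / 2)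
    (U : EuclideanSpace ℂ (Fin M) ≃ₗᵢ[ℂ] EuclideanSpace ℂ (Fin M)) (idx ans : Fin M → ℕ)
    {init : EuclideanSpace ℂ (Fin M)} (hinit : ‖init‖ = 1) (T : ℕ)
    (hcorrect : ∀ x : ℕ → Bool, SortedNonzero N x →
      1 - ε ≤ successProb ans (fval x) (stateAfter N M U idx x init T)) :
    weightedOverlap N (fun j => stateAfter N M U idx (thresholdInput j) init T) ≤
      2 * √(ε * (1 - ε)) * (N * harmonic N - N) := by
  refine weightedOverlap_le fun j k hjk hk => ?_
  have hj := hcorrect _ (sortedNonzero_thresholdInput (hjk.trans hk))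
  have hk := hcorrect _ (sortedNonzero_thresholdInput hk)
  rw [fval_thresholdInput, successProb] at hj hk
  exact re_inner_le_of_disjoint hε0 hε1 ((norm_stateAfter U idx _ init T).trans hinit)
    ((norm_stateAfter U idx _ init T).trans hinit)
    (disjoint_filter.mpr fun b _ hbj hbk => hjk.ne (hbj.symm.trans hbk)) hj hk

end QueryModel

theorem ordered_search_lower_bound
    (N M T : ℕ) (hN : 0 < N) (ε : ℝ) (hε0 : 0 ≤ ε) (hε1 : ε ≤ 1 / 2)
    (U : EuclideanSpace ℂ (Fin M) ≃ₗᵢ[ℂ] EuclideanSpace ℂ (Fin M))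
    (idx : Fin M → ℕ) (ans : Fin M → ℕ)
    (init : EuclideanSpace ℂ (Fin M)) (hinit : ‖init‖ = 1)
    (hcorrect : ∀ x : ℕ → Bool, SortedNonzero N x →
      1 - ε ≤ successProb ans (fval x) (stateAfter N M U idx x init T)) :
    (1 - 2 * Real.sqrt (ε * (1 - ε))) *
        ((∑ k ∈ Finset.Icc 1 N, (1 : ℝ) / k) - 1) / Real.pi ≤ (T : ℝ) ∧
    (ε = 0 → (Real.log N - 1) / Real.pi < (T : ℝ)) := by
  have hstart : weightedOverlap N (fun j => stateAfter N M U idx (thresholdInput j) init 0) =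
      N * harmonic N - N :=
    weightedOverlap_const ((U.norm_map init).trans hinit)
  have htotal := weightedOverlap_stateAfter_zero_sub_le (N := N) U idx hinit T
  have hfinal := weightedOverlap_stateAfter_le hε0 hε1 U idx ans hinit T hcorrect
  have hbound : (1 - 2 * √(ε * (1 - ε))) * (harmonic N - 1) ≤ T * π := by
    refine le_of_mul_le_mul_right ?_ (Nat.cast_pos.mpr hN : (0 : ℝ) < N)
    nlinarith
  refine ⟨?_, fun hε => ?_⟩
  · rw [sum_Icc_one_div_eq_harmonic, div_le_iff₀ pi_pos]
    exact hbound
  · subst hε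
    simp only [zero_mul, sqrt_zero, mul_zero, sub_zero, one_mul] at hbound
    rw [div_lt_iff₀ pi_pos]
    linarith [log_lt_harmonic hN]
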